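/- Let ε ∈ (0,1), Δ_l = 2^{-l}, I_l = ⌈ε^{-2} Δ_l^{6/7}⌉, N_l = ⌈ε^{-2} Δ_l^{1/2}⌉, and L = ⌈log₂(1/ε)⌉. Then there exists a constant C < ∞, independent of ε, such that the total computational cost ∑_{l=1}^{L} I_l · Δ_l^{-1} · N_l² ≤ C ε^{-6}. -/
import Mathlib


/-- Total computational cost of the multilevel particle MCMC method:
with I_l = ⌈ε^{-2} Δ_l^{6/7}⌉, N_l = ⌈ε^{-2} Δ_l^{1/2}⌉, Δ_l = 2^{-l} and
L = ⌈log₂(1/ε)⌉, one has ∑_{l=1}^{L} I_l Δ_l^{-1} N_l² ≤ C ε^{-6}. -/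
theorem multilevel_cost_bound :
    ∃ C : ℝ, ∀ ε : ℝ, 0 < ε → ε < 1 →
      ∑ l ∈ Finset.Icc 1 ⌈Real.logb 2 (1 / ε)⌉₊,
          (⌈ε⁻¹ ^ 2 * ((2 : ℝ) ^ (-(l : ℝ))) ^ ((6 : ℝ) / 7)⌉₊ : ℝ) *
            ((2 : ℝ) ^ (-(l : ℝ)))⁻¹ *
            ((⌈ε⁻¹ ^ 2 * ((2 : ℝ) ^ (-(l : ℝ))) ^ ((1 : ℝ) / 2)⌉₊ : ℝ)) ^ 2
        ≤ C * ε⁻¹ ^ 6 := by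
  refine ⟨200, fun ε hε hε1 => ?_⟩
  set L := ⌈Real.logb 2 (1 / ε)⌉₊ with hL
  have hεinv : 1 ≤ ε⁻¹ := (one_le_inv_iff₀).2 ⟨hε, hε1.le⟩
  have hεinv6 : (1 : ℝ) ≤ ε⁻¹ ^ 6 := one_le_pow₀ hεinv
  set r : ℝ := (2 : ℝ) ^ (-(6 : ℝ) / 7) with hr
  -- termwise bound
  have key : ∀ l ∈ Finset.Icc 1 L,
      (⌈ε⁻¹ ^ 2 * ((2 : ℝ) ^ (-(l : ℝ))) ^ ((6 : ℝ) / 7)⌉₊ : ℝ) *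
          ((2 : ℝ) ^ (-(l : ℝ)))⁻¹ *
          ((⌈ε⁻¹ ^ 2 * ((2 : ℝ) ^ (-(l : ℝ))) ^ ((1 : ℝ) / 2)⌉₊ : ℝ)) ^ 2
        ≤ 27 * ε⁻¹ ^ 6 * r ^ l := by
    intro l hl
    simp only [Finset.mem_Icc] at hl
    set x : ℝ := (2 : ℝ) ^ (-(l : ℝ)) with hx
    have hx0 : (0 : ℝ) < x := Real.rpow_pos_of_pos (by norm_num) _
    have hx1 : x ≤ 1 := Real.rpow_le_one_of_one_le_of_nonpos (by norm_num)
      (by simp)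
    -- lower bound x ≥ ε/2
    have hlogb0 : 0 ≤ Real.logb 2 (1 / ε) := Real.logb_nonneg (by norm_num)
      (by rw [le_one_div (by norm_num) hε]; linarith)
    have hlL : (l : ℝ) ≤ Real.logb 2 (1 / ε) + 1 := by
      have h1 : (l : ℝ) ≤ (L : ℝ) := by exact_mod_cast hl.2
      have h2 : (L : ℝ) < Real.logb 2 (1 / ε) + 1 := Nat.ceil_lt_add_one hlogb0
      linarith
    have hxε : ε / 2 ≤ x := by
      have h1 : (2 : ℝ) ^ (-(Real.logb 2 (1 / ε) + 1)) ≤ x :=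
        Real.rpow_le_rpow_of_exponent_le (by norm_num) (by linarith)
      have h2 : (2 : ℝ) ^ (-(Real.logb 2 (1 / ε) + 1)) = ε / 2 := by
        rw [neg_add, Real.rpow_add (by norm_num), Real.rpow_neg (by norm_num),
          Real.rpow_logb (by norm_num) (by norm_num) (by positivity)]
        rw [one_div, inv_inv]
        norm_num [Real.rpow_neg_one]
        ring
      linarith
    -- ceilings bounds
    have hxmid : (1 : ℝ) / 2 ≤ ε⁻¹ ^ 2 * x := by
      have : ε⁻¹ ^ 2 * (ε / 2) = ε⁻¹ / 2 := by field_simp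
      nlinarith [mul_le_mul_of_nonneg_left hxε (by positivity : (0:ℝ) ≤ ε⁻¹ ^ 2)]
    have hA : x ≤ x ^ ((6 : ℝ) / 7) := by
      nth_rewrite 1 [← Real.rpow_one x]
      exact Real.rpow_le_rpow_of_exponent_ge hx0 hx1 (by norm_num)
    have hB : x ≤ x ^ ((1 : ℝ) / 2) := by
      nth_rewrite 1 [← Real.rpow_one x]
      exact Real.rpow_le_rpow_of_exponent_ge hx0 hx1 (by norm_num)
    have hA2 : (1 : ℝ) / 2 ≤ ε⁻¹ ^ 2 * x ^ ((6 : ℝ) / 7) := by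
      nlinarith [mul_le_mul_of_nonneg_left hA (by positivity : (0:ℝ) ≤ ε⁻¹ ^ 2)]
    have hB2 : (1 : ℝ) / 2 ≤ ε⁻¹ ^ 2 * x ^ ((1 : ℝ) / 2) := by
      nlinarith [mul_le_mul_of_nonneg_left hB (by positivity : (0:ℝ) ≤ ε⁻¹ ^ 2)]
    have hceilA : (⌈ε⁻¹ ^ 2 * x ^ ((6 : ℝ) / 7)⌉₊ : ℝ) ≤ 3 * (ε⁻¹ ^ 2 * x ^ ((6 : ℝ) / 7)) := by
      have := Nat.ceil_lt_add_one (by positivity : (0:ℝ) ≤ ε⁻¹ ^ 2 * x ^ ((6 : ℝ) / 7))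
      linarith
    have hceilB : (⌈ε⁻¹ ^ 2 * x ^ ((1 : ℝ) / 2)⌉₊ : ℝ) ≤ 3 * (ε⁻¹ ^ 2 * x ^ ((1 : ℝ) / 2)) := by
      have := Nat.ceil_lt_add_one (by positivity : (0:ℝ) ≤ ε⁻¹ ^ 2 * x ^ ((1 : ℝ) / 2))
      linarith
    have hBsq : (x ^ ((1 : ℝ) / 2)) ^ 2 = x := by
      rw [← Real.rpow_natCast (x ^ ((1 : ℝ) / 2)) 2, ← Real.rpow_mul hx0.le]
      norm_num
    have hstep : (⌈ε⁻¹ ^ 2 * x ^ ((6 : ℝ) / 7)⌉₊ : ℝ) * x⁻¹ *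
        ((⌈ε⁻¹ ^ 2 * x ^ ((1 : ℝ) / 2)⌉₊ : ℝ)) ^ 2
        ≤ 27 * ε⁻¹ ^ 6 * x ^ ((6 : ℝ) / 7) := by
      have h1 : ((⌈ε⁻¹ ^ 2 * x ^ ((1 : ℝ) / 2)⌉₊ : ℝ)) ^ 2
          ≤ 9 * ε⁻¹ ^ 4 * x := by
        have := mul_self_le_mul_self (by positivity : (0:ℝ) ≤ (⌈ε⁻¹ ^ 2 * x ^ ((1 : ℝ) / 2)⌉₊ : ℝ))
          hceilB
        calc ((⌈ε⁻¹ ^ 2 * x ^ ((1 : ℝ) / 2)⌉₊ : ℝ)) ^ 2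
            ≤ (3 * (ε⁻¹ ^ 2 * x ^ ((1 : ℝ) / 2))) ^ 2 := by
              exact pow_le_pow_left₀ (by positivity) hceilB 2
          _ = 9 * ε⁻¹ ^ 4 * (x ^ ((1 : ℝ) / 2)) ^ 2 := by ring
          _ = 9 * ε⁻¹ ^ 4 * x := by rw [hBsq]
      calc (⌈ε⁻¹ ^ 2 * x ^ ((6 : ℝ) / 7)⌉₊ : ℝ) * x⁻¹ *
            ((⌈ε⁻¹ ^ 2 * x ^ ((1 : ℝ) / 2)⌉₊ : ℝ)) ^ 2
          ≤ (3 * (ε⁻¹ ^ 2 * x ^ ((6 : ℝ) / 7))) * x⁻¹ * (9 * ε⁻¹ ^ 4 * x) := by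
            apply mul_le_mul (mul_le_mul_of_nonneg_right hceilA (by positivity)) h1
              (by positivity) (by positivity)
        _ = 27 * ε⁻¹ ^ 6 * x ^ ((6 : ℝ) / 7) * (x⁻¹ * x) := by ring
        _ = 27 * ε⁻¹ ^ 6 * x ^ ((6 : ℝ) / 7) := by
            rw [inv_mul_cancel₀ hx0.ne', mul_one]
    have hxr : x ^ ((6 : ℝ) / 7) = r ^ l := by
      rw [hx, hr, ← Real.rpow_natCast ((2:ℝ) ^ (-(6:ℝ)/7)) l,
        ← Real.rpow_mul (by norm_num : (0:ℝ) ≤ 2),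
        ← Real.rpow_mul (by norm_num : (0:ℝ) ≤ 2)]
      ring_nf
    rw [← hxr]
    exact hstep
  -- sum the geometric series
  have hr34 : r ≤ 3 / 4 := by
    have h1 : r ≤ (2 : ℝ) ^ (-(1 : ℝ) / 2) :=
      Real.rpow_le_rpow_of_exponent_le (by norm_num) (by norm_num)
    have h2 : (2 : ℝ) ^ (-(1 : ℝ) / 2) ≤ 3 / 4 := by
      rw [show (-(1:ℝ)/2) = -(1/2) by norm_num, Real.rpow_neg (by norm_num),
        ← Real.sqrt_eq_rpow]
      rw [inv_le_comm₀ (Real.sqrt_pos.2 (by norm_num)) (by norm_num)]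
      rw [show (3/4 : ℝ)⁻¹ = 4/3 by norm_num]
      exact (Real.le_sqrt (by norm_num) (by norm_num)).2 (by norm_num)
    linarith
  have hr0 : 0 ≤ r := le_of_lt (Real.rpow_pos_of_pos (by norm_num) _)
  have hgeom : ∑ l ∈ Finset.Icc 1 L, r ^ l ≤ 4 := by
    have h1 : ∑ l ∈ Finset.Icc 1 L, r ^ l ≤ ∑ l ∈ Finset.Icc 1 L, (3/4 : ℝ) ^ l :=
      Finset.sum_le_sum fun l _ => pow_le_pow_left₀ hr0 hr34 l
    have h2 : ∑ l ∈ Finset.Icc 1 L, (3/4 : ℝ) ^ l ≤ ∑ l ∈ Finset.range (L+1), (3/4 : ℝ) ^ l := by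
      apply Finset.sum_le_sum_of_subset_of_nonneg
      · intro l hl
        simp only [Finset.mem_Icc] at hl
        simp only [Finset.mem_range]
        omega
      · intros; positivity
    have h3 : ∑ l ∈ Finset.range (L+1), (3/4 : ℝ) ^ l ≤ 4 := by
      rw [geom_sum_eq (by norm_num : (3/4:ℝ) ≠ 1)]
      have : (0:ℝ) ≤ (3/4:ℝ) ^ (L+1) := by positivity
      have h4 : ((3/4:ℝ) ^ (L+1) - 1) / ((3/4:ℝ) - 1) = (1 - (3/4:ℝ) ^ (L+1)) * 4 := by
        ring
      rw [h4]; nlinarith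
    linarith
  calc ∑ l ∈ Finset.Icc 1 L,
        (⌈ε⁻¹ ^ 2 * ((2 : ℝ) ^ (-(l : ℝ))) ^ ((6 : ℝ) / 7)⌉₊ : ℝ) *
          ((2 : ℝ) ^ (-(l : ℝ)))⁻¹ *
          ((⌈ε⁻¹ ^ 2 * ((2 : ℝ) ^ (-(l : ℝ))) ^ ((1 : ℝ) / 2)⌉₊ : ℝ)) ^ 2
      ≤ ∑ l ∈ Finset.Icc 1 L, 27 * ε⁻¹ ^ 6 * r ^ l := Finset.sum_le_sum key
    _ = 27 * ε⁻¹ ^ 6 * ∑ l ∈ Finset.Icc 1 L, r ^ l := by rw [Finset.mul_sum]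
    _ ≤ 27 * ε⁻¹ ^ 6 * 4 := by
        apply mul_le_mul_of_nonneg_left hgeom (by positivity)
    _ ≤ 200 * ε⁻¹ ^ 6 := by nlinarith
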